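/- The quantum Fisher information is bounded by four times the variance: for every density matrix ρ, every spectral decomposition ρ = Σ_k p_k |k⟩⟨k| into an orthonormal eigenbasis, and every Hermitian matrix G of the same size, one has 2·Σ_{k,l : p_k + p_l > 0} ((p_k − p_l)²/(p_k + p_l))·|⟨k|G|l⟩|² ≤ 4·(tr(ρG²) − (tr(ρG))²). -/

import Mathlib

open Matrix Complex
open scoped ComplexOrder

/-- The quantum Fisher information of a state with spectral data `(p, v)` (eigenvalues `p k`
and orthonormal eigenvectors `v k`) with respect to a generator `G`:
`F_Q = 2 Σ_{k,l : p_k+p_l>0} ((p_k-p_l)²/(p_k+p_l)) |⟨k|G|l⟩|²`. -/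
noncomputable def qfi {n : ℕ} (p : Fin n → ℝ) (v : Fin n → (Fin n → ℂ))
    (G : Matrix (Fin n) (Fin n) ℂ) : ℝ :=
  2 * ∑ k : Fin n, ∑ l : Fin n,
    if 0 < p k + p l then
      ((p k - p l) ^ 2 / (p k + p l)) * ‖star (v k) ⬝ᵥ G.mulVec (v l)‖ ^ 2
    else 0

/-! In the eigenbasis of `ρ` put `g k l = ⟨k|G|l⟩`; then `|g k l| = |g l k|`, `g k k` is real,
`tr(ρG) = Σ p_k g_kk` and, inserting the resolution of the identity `Σ_l |l⟩⟨l|`,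
`tr(ρG²) = Σ_k p_k Σ_l |g k l|²`. The QFI weight `(p_k - p_l)²/(p_k + p_l)` is at most
`p_k + p_l` and vanishes on the diagonal, so by the symmetry of `|g k l|²`
`F_Q ≤ 4 (tr(ρG²) - Σ_k p_k g_kk²)`, and `(Σ_k p_k g_kk)² ≤ Σ_k p_k g_kk²` is Cauchy–Schwarz
for the probability vector `p`. -/

open Finset

section

variable {ι : Type*} [Fintype ι]

theorem sq_sum_mul_le_sum_mul_sq {p : ι → ℝ} (hp : ∀ k, 0 ≤ p k) (hsum : ∑ k, p k = 1)
    (x : ι → ℝ) : (∑ k, p k * x k) ^ 2 ≤ ∑ k, p k * x k ^ 2 := by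
  have := sum_sq_le_sum_mul_sum_of_sq_le_mul univ (r := fun k => p k * x k)
    (fun k _ => hp k) (fun k _ => mul_nonneg (hp k) (sq_nonneg (x k)))
    (fun k _ => (by ring : (p k * x k) ^ 2 = p k * (p k * x k ^ 2)).le)
  rwa [hsum, one_mul] at this

theorem sq_sub_div_add_le_add {a b : ℝ} (ha : 0 ≤ a) (hb : 0 ≤ b) :
    (a - b) ^ 2 / (a + b) ≤ a + b :=
  div_le_of_le_mul₀ (by positivity) (by positivity) (by nlinarith)

theorem sum_qfi_weight_mul_le {p : ι → ℝ} (hp : ∀ k, 0 ≤ p k) {A : ι → ι → ℝ}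
    (hA : ∀ k l, 0 ≤ A k l) (hA_symm : ∀ k l, A l k = A k l) :
    ∑ k, ∑ l, (if 0 < p k + p l then (p k - p l) ^ 2 / (p k + p l) * A k l else 0)
      ≤ 2 * (∑ k, p k * ∑ l, A k l - ∑ k, p k * A k k) := by
  classical
  have hterm : ∀ k l, (if 0 < p k + p l then (p k - p l) ^ 2 / (p k + p l) * A k l else 0)
      ≤ (p k + p l - if k = l then 2 * p k else 0) * A k l := by
    intro k l
    rw [← ite_zero_mul]
    refine mul_le_mul_of_nonneg_right ?_ (hA k l)
    rcases eq_or_ne k l with rfl | hkl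
    · simp [two_mul]
    · rw [if_neg hkl, sub_zero]
      split_ifs
      · exact sq_sub_div_add_le_add (hp k) (hp l)
      · exact add_nonneg (hp k) (hp l)
  have hswap : ∑ k, ∑ l, p l * A k l = ∑ k, p k * ∑ l, A k l := by
    rw [sum_comm]
    simp_rw [hA_symm, mul_sum]
  calc _ ≤ ∑ k, ∑ l, (p k + p l - if k = l then 2 * p k else 0) * A k l :=
        sum_le_sum fun k _ => sum_le_sum fun l _ => hterm k l
    _ = 2 * (∑ k, p k * ∑ l, A k l - ∑ k, p k * A k k) := by
      simp only [sub_mul, add_mul, ite_mul, zero_mul, sum_sub_distrib, sum_add_distrib,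
        sum_ite_eq, mem_univ, if_true, hswap, mul_assoc, ← mul_sum]
      ring

variable {𝕜 : Type*} [RCLike 𝕜] {H : Matrix ι ι 𝕜}

theorem Matrix.IsHermitian.re_mul_self_apply (hH : H.IsHermitian) (k : ι) :
    RCLike.re ((H * H) k k) = ∑ l, ‖H k l‖ ^ 2 := by
  simp only [mul_apply, ← hH.apply _ k, RCLike.star_def, RCLike.mul_conj, map_sum,
    ← RCLike.ofReal_pow, RCLike.ofReal_re]

theorem Matrix.IsHermitian.sum_qfi_le_four_variance (hH : H.IsHermitian) {p : ι → ℝ}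
    (hp : ∀ k, 0 ≤ p k) (hsum : ∑ k, p k = 1) :
    2 * ∑ k, ∑ l, (if 0 < p k + p l then (p k - p l) ^ 2 / (p k + p l) * ‖H k l‖ ^ 2 else 0)
      ≤ 4 * (∑ k, p k * RCLike.re ((H * H) k k) - (∑ k, p k * RCLike.re (H k k)) ^ 2) := by
  have hsymm : ∀ k l, ‖H l k‖ ^ 2 = ‖H k l‖ ^ 2 := fun k l => by
    rw [← hH.apply k l, norm_star]
  have hdiag : ∀ k, ‖H k k‖ ^ 2 = RCLike.re (H k k) ^ 2 := fun k => by
    conv_lhs => rw [← hH.coe_re_apply_self k, RCLike.norm_ofReal, sq_abs]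
  have hweight := sum_qfi_weight_mul_le hp (fun k l => sq_nonneg ‖H k l‖) hsymm
  simp only [hdiag, ← hH.re_mul_self_apply] at hweight
  linarith [sq_sum_mul_le_sum_mul_sq hp hsum (fun k => RCLike.re (H k k))]

end

section

variable {n R : Type*} [Fintype n]

theorem Matrix.trace_sum_smul_vecMulVec_mul [CommSemiring R] {ι : Type*} [Fintype ι]
    (c : ι → R) (u w : ι → n → R) (X : Matrix n n R) :
    ((∑ k, c k • vecMulVec (u k) (w k)) * X).trace = ∑ k, c k * (w k ⬝ᵥ X *ᵥ u k) := by
  rw [sum_mul, trace_sum]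
  refine sum_congr rfl fun k _ => ?_
  rw [smul_mul, trace_smul, vecMulVec_mul, trace_vecMulVec, dotProduct_mulVec, dotProduct_comm,
    smul_eq_mul]

theorem Matrix.conjTranspose_mul_mul_apply [Semiring R] [StarRing R] (v : n → n → R)
    (X : Matrix n n R) (k l : n) :
    ((of v)ᵀᴴ * X * (of v)ᵀ) k l = star (v k) ⬝ᵥ X *ᵥ v l := by
  rw [mul_mul_apply]
  rfl

theorem Matrix.conjTranspose_mul_self_eq_one_of_orthonormal [DecidableEq n] [Semiring R]
    [StarRing R] (v : n → n → R)
    (hortho : ∀ k l, star (v k) ⬝ᵥ v l = if k = l then 1 else 0) :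
    (of v)ᵀᴴ * (of v)ᵀ = 1 := by
  ext k l
  exact hortho k l

theorem Matrix.conjTranspose_mul_mul_mul_of_mul_conjTranspose_eq_one [DecidableEq n]
    [Semiring R] [StarRing R] {U : Matrix n n R} (hU : U * Uᴴ = 1) (X Y : Matrix n n R) :
    Uᴴ * (X * Y) * U = Uᴴ * X * U * (Uᴴ * Y * U) := by
  simp only [Matrix.mul_assoc, ← Matrix.mul_assoc U Uᴴ, hU, Matrix.one_mul]

end

theorem qfi_le_four_variance_general {n : ℕ} (ρ G : Matrix (Fin n) (Fin n) ℂ)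
    (htr : ρ.trace = 1) (hG : G.IsHermitian)
    (p : Fin n → ℝ) (v : Fin n → (Fin n → ℂ))
    (hp : ∀ k, 0 ≤ p k)
    (hortho : ∀ k l, star (v k) ⬝ᵥ v l = if k = l then 1 else 0)
    (hdecomp : ρ = ∑ k : Fin n, (p k : ℂ) • Matrix.vecMulVec (v k) (star (v k))) :
    qfi p v G ≤ 4 * (((ρ * (G * G)).trace).re - (((ρ * G).trace).re) ^ 2) := by
  -- `(of v)ᵀ` is the unitary whose columns are the eigenvectors `v k`.
  have hUU : (of v)ᵀᴴ * (of v)ᵀ = 1 := conjTranspose_mul_self_eq_one_of_orthonormal v hortho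
  have hre_trace : ∀ X, ((ρ * X).trace).re = ∑ k, p k * (((of v)ᵀᴴ * X * (of v)ᵀ) k k).re :=
    fun X => by
      simp only [hdecomp, trace_sum_smul_vecMulVec_mul, re_sum, re_ofReal_mul,
        conjTranspose_mul_mul_apply]
  have hsum : ∑ k, p k = 1 := by simpa [htr, hUU] using (hre_trace 1).symm
  rw [hre_trace, hre_trace,
    conjTranspose_mul_mul_mul_of_mul_conjTranspose_eq_one (mul_eq_one_comm.mp hUU)]
  simpa only [qfi, conjTranspose_mul_mul_apply, RCLike.re_to_complex] using
    (isHermitian_conjTranspose_mul_mul (of v)ᵀ hG).sum_qfi_le_four_variance hp hsum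

/-- The quantum Fisher information is bounded by four times the variance: for every density
matrix `ρ` with spectral decomposition `ρ = Σ_k p_k |k⟩⟨k|` into an orthonormal eigenbasis,
and every Hermitian `G`, one has `F_Q(ρ,G) ≤ 4 (tr(ρG²) - (tr(ρG))²)`. -/
theorem qfi_le_four_variance {n : ℕ} (ρ G : Matrix (Fin n) (Fin n) ℂ)
    (hρ : ρ.PosSemidef) (htr : ρ.trace = 1) (hG : G.IsHermitian)
    (p : Fin n → ℝ) (v : Fin n → (Fin n → ℂ))
    (hp : ∀ k, 0 ≤ p k)
    (hortho : ∀ k l, star (v k) ⬝ᵥ v l = if k = l then 1 else 0)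
    (hdecomp : ρ = ∑ k : Fin n, (p k : ℂ) • Matrix.vecMulVec (v k) (star (v k))) :
    qfi p v G ≤ 4 * (((ρ * (G * G)).trace).re - (((ρ * G).trace).re) ^ 2) :=
  qfi_le_four_variance_general ρ G htr hG p v hp hortho hdecomp
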